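/- Let δ > 0 and i ∈ ℤ, and for k ∈ ℕ define f_k ∈ L²((−1/2,1/2)) by f_k(ξ) = e^{−kδξ²}·e^{2πi·i·ξ}. Then (f_k)_{k∈ℕ} is not a Bessel sequence in L²((−1/2,1/2)): for every C > 0 there exists g ∈ L²((−1/2,1/2)) with ∑_{k∈ℕ} |⟨g, f_k⟩|² > C‖g‖². -/

import Mathlib

open MeasureTheory Real

/-- The sequence arising in dynamical sampling for the heat equation:
`f_k(ξ) = e^{-kδξ²} · e^{2πi·i·ξ}` on `(-1/2, 1/2)`. -/
noncomputable def heatSeq (δ : ℝ) (i : ℤ) (k : ℕ) (ξ : ℝ) : ℂ :=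
  (Real.exp (-(k * δ * ξ ^ 2)) : ℂ) *
    Complex.exp (2 * Real.pi * Complex.I * (i : ℂ) * (ξ : ℂ))

/-!
Test against `g = e_i`, the exponential carried by every `f_k`: then `⟨g, f_k⟩ = ∫ e^{-kδξ²} dξ`
and `‖g‖ = 1`. The Gaussian `e^{-kδξ²}` stays above `e^{-1}` on an interval of length
`(1 + kδ)^{-1/2}`, so `|⟨g, f_k⟩|² ≥ e^{-2}/(1 + kδ)`, which is comparable to the harmonic
series and hence not summable.
-/

open Complex in
noncomputable def fourierExp (i : ℤ) (ξ : ℝ) : ℂ := exp (2 * π * I * i * ξ)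

lemma norm_fourierExp (i : ℤ) (ξ : ℝ) : ‖fourierExp i ξ‖ = 1 := by
  rw [fourierExp, Complex.norm_exp]
  simp

lemma fourierExp_mul_conj_heatSeq (δ : ℝ) (i : ℤ) (k : ℕ) (ξ : ℝ) :
    fourierExp i ξ * starRingEnd ℂ (heatSeq δ i k ξ) = (Real.exp (-(k * δ * ξ ^ 2)) : ℂ) := by
  rw [heatSeq, ← fourierExp, map_mul, Complex.conj_ofReal, mul_left_comm, Complex.mul_conj,
    Complex.normSq_eq_norm_sq, norm_fourierExp]
  simp

lemma two_mul_mul_exp_neg_mul_sq_le_setIntegral {t a b : ℝ} (ht : 0 ≤ t) (ha : 0 ≤ a)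
    (hab : a ≤ b) :
    2 * a * Real.exp (-(t * a ^ 2)) ≤ ∫ ξ in Set.Ioo (-b) b, Real.exp (-(t * ξ ^ 2)) := by
  have hint : IntegrableOn (fun ξ : ℝ ↦ Real.exp (-(t * ξ ^ 2))) (Set.Ioo (-b) b) :=
    (Continuous.integrableOn_Icc (by fun_prop)).mono_set Set.Ioo_subset_Icc_self
  calc 2 * a * Real.exp (-(t * a ^ 2)) = ∫ _ in Set.Ioo (-a) a, Real.exp (-(t * a ^ 2)) := by
        rw [setIntegral_const, Real.volume_real_Ioo_of_le (by linarith), smul_eq_mul]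
        ring
    _ ≤ ∫ ξ in Set.Ioo (-a) a, Real.exp (-(t * ξ ^ 2)) := by
        refine setIntegral_mono_on (integrableOn_const (by simp))
          (hint.mono_set (Set.Ioo_subset_Ioo (by linarith) hab)) measurableSet_Ioo fun ξ hξ ↦ ?_
        have : ξ ^ 2 ≤ a ^ 2 := sq_le_sq' hξ.1.le hξ.2.le
        gcongr
    _ ≤ ∫ ξ in Set.Ioo (-b) b, Real.exp (-(t * ξ ^ 2)) :=
        setIntegral_mono_set hint (.of_forall fun _ ↦ (Real.exp_pos _).le)
          (.of_forall (Set.Ioo_subset_Ioo (by linarith) hab))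

lemma exp_neg_one_div_sqrt_le_setIntegral {t : ℝ} (ht : 0 ≤ t) :
    Real.exp (-1) / √(1 + t) ≤ ∫ ξ in Set.Ioo (-(1 / 2)) (1 / 2), Real.exp (-(t * ξ ^ 2)) := by
  have hs : 1 ≤ √(1 + t) := Real.one_le_sqrt.2 (by linarith)
  set a := 1 / (2 * √(1 + t))
  have ha : a ^ 2 = 1 / (4 * (1 + t)) := by
    rw [div_pow, mul_pow, Real.sq_sqrt (by linarith)]; norm_num
  have hta : t * a ^ 2 ≤ 1 := by
    rw [ha, mul_one_div, div_le_one (by positivity)]; linarith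
  calc Real.exp (-1) / √(1 + t) = 2 * a * Real.exp (-1) := by
        simp only [a]; field_simp
    _ ≤ 2 * a * Real.exp (-(t * a ^ 2)) := by gcongr
    _ ≤ _ := two_mul_mul_exp_neg_mul_sq_le_setIntegral ht (by positivity) <| by
        simp only [a]; gcongr; linarith

lemma not_summable_sq_setIntegral_exp_neg_mul_sq {δ : ℝ} (hδ : 0 ≤ δ) :
    ¬Summable fun k : ℕ ↦ (∫ ξ in Set.Ioo (-(1 / 2)) (1 / 2), Real.exp (-(k * δ * ξ ^ 2))) ^ 2 := by
  intro hsum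
  have hharmonic : Summable fun k : ℕ ↦ Real.exp (-1) ^ 2 / (1 + δ) * (1 / ((k : ℝ) + 1)) := by
    refine hsum.of_nonneg_of_le (fun _ ↦ by positivity) fun k ↦ ?_
    have hk : 1 + k * δ ≤ (1 + δ) * (k + 1) := by nlinarith [k.cast_nonneg (α := ℝ)]
    calc Real.exp (-1) ^ 2 / (1 + δ) * (1 / ((k : ℝ) + 1))
        = Real.exp (-1) ^ 2 / ((1 + δ) * (k + 1)) := by field_simp
      _ ≤ Real.exp (-1) ^ 2 / (1 + k * δ) := by gcongr
      _ = (Real.exp (-1) / √(1 + k * δ)) ^ 2 := by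
        rw [div_pow, Real.sq_sqrt (by positivity)]
      _ ≤ _ := by
        gcongr
        exact exp_neg_one_div_sqrt_le_setIntegral (by positivity)
  refine Real.not_summable_one_div_natCast ((summable_nat_add_iff 1).1 ?_)
  exact_mod_cast (summable_mul_left_iff (by positivity)).1 hharmonic

/-- `(f_k)_{k∈ℕ}` is not a Bessel sequence in `L²(-1/2, 1/2)`: for every `C > 0` there is
`g ∈ L²(-1/2, 1/2)` with `∑_k |⟨g, f_k⟩|² > C‖g‖²` (witnessed by a finite partial sum). -/
theorem stmt_19 (δ : ℝ) (hδ : 0 < δ) (i : ℤ) :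
    ∀ C > 0, ∃ g : ℝ → ℂ,
      MemLp g 2 (volume.restrict (Set.Ioo (-(1 : ℝ) / 2) (1 / 2))) ∧
      ∃ F : Finset ℕ,
        C * ∫ ξ in Set.Ioo (-(1 : ℝ) / 2) (1 / 2), ‖g ξ‖ ^ 2 <
          ∑ k ∈ F, ‖∫ ξ in Set.Ioo (-(1 : ℝ) / 2) (1 / 2),
            g ξ * (starRingEnd ℂ) (heatSeq δ i k ξ)‖ ^ 2 := by
  intro C _
  refine ⟨fourierExp i, .of_bound (by unfold fourierExp; fun_prop) 1
    (.of_forall fun ξ ↦ (norm_fourierExp i ξ).le), ?_⟩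
  have hdiv := (not_summable_iff_tendsto_nat_atTop_of_nonneg fun _ ↦ sq_nonneg _).1
    (not_summable_sq_setIntegral_exp_neg_mul_sq hδ.le)
  obtain ⟨N, hN⟩ := (hdiv.eventually_gt_atTop C).exists
  refine ⟨Finset.range N, ?_⟩
  have hnorm : ∫ ξ in Set.Ioo (-(1 : ℝ) / 2) (1 / 2), ‖fourierExp i ξ‖ ^ 2 = 1 := by
    simp only [norm_fourierExp, one_pow, setIntegral_const, Real.volume_real_Ioo, smul_eq_mul,
      mul_one]
    norm_num
  rw [hnorm, mul_one]
  simpa only [fourierExp_mul_conj_heatSeq, integral_complex_ofReal, Complex.norm_real,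
    Real.norm_eq_abs, sq_abs, neg_div] using hN
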